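/- arXiv:2004.01794 — 3 statements merged into one kernel-verified Lean document; each statement's English description precedes it below -/
import Mathlib

section
/- Let G be a finite simple connected graph in which every cycle contains at least 3 vertices of degree at least 3 (degrees in G), every vertex has degree at least 1, at least two vertices have degree 1, and every path joining two vertices of degree 1 contains at least 2 vertices of degree at least 3. Then G is not a tree. -/
/-!
Suppose `G` is a tree. The path between the two given leaves contains a vertex of degree at
least 3, so there is a longest path `q` from such a vertex to a vertex `w` of degree at least 3.
Acyclicity allows at most one neighbour of `w` on `q`, so `w` has two neighbours `z₁ ≠ z₂`
off `q`.
Extending `q` through `zᵢ` as far as possible ends at a leaf `xᵢ`, and by the maximality of `q`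
no vertex after `w` has degree at least 3. Hence the path from `x₁` through `w` to `x₂` contains
only one vertex of degree at least 3.
-/

open Finset

namespace SimpleGraph

variable {V : Type*} [Fintype V] {G : SimpleGraph V}

theorem exists_walk_forall_length_le_length {a : V} (P : ∀ x, G.Walk a x → Prop)
    (hne : ∃ (x : V) (p : G.Walk a x), P x p) (hpath : ∀ x p, P x p → p.IsPath) :
    ∃ (x : V) (p : G.Walk a x), P x p ∧ ∀ y (p' : G.Walk a y), P y p' → p'.length ≤ p.length := by
  set S : Set ℕ := {n | ∃ (x : V) (p : G.Walk a x), P x p ∧ p.length = n}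
  have hbdd : BddAbove S :=
    ⟨Fintype.card V, by rintro _ ⟨x, p, hp, rfl⟩; exact (hpath x p hp).length_lt.le⟩
  obtain ⟨x, p, hp⟩ := hne
  obtain ⟨y, q, hq, hlen⟩ := Nat.sSup_mem (⟨_, x, p, hp, rfl⟩ : S.Nonempty) hbdd
  exact ⟨y, q, hq, fun z r hr => hlen ▸ le_csSup hbdd ⟨z, r, hr, rfl⟩⟩

variable [DecidableRel G.Adj]

theorem IsAcyclic.exists_isPath_append_degree_eq_one (hG : G.IsAcyclic) {a z : V}
    {r : G.Walk a z} (hr : r.IsPath) (hnil : ¬r.Nil) :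
    ∃ (x : V) (s : G.Walk z x), (r.append s).IsPath ∧ G.degree x = 1 := by
  obtain ⟨x, s, hs, hmax⟩ := exists_walk_forall_length_le_length
    (fun _ s => (r.append s).IsPath) ⟨z, .nil, by simpa⟩ fun _ _ h => h.of_append_right
  have hnil' : ¬(r.append s).Nil := fun h => hnil (Walk.nil_append_iff.mp h).1
  refine ⟨x, s, hs, degree_eq_one_iff_existsUnique_adj.mpr
    ⟨_, (Walk.adj_penultimate hnil').symm, fun t ht => hG.eq_penultimate_of_adj_end hs ht ?_⟩⟩
  by_contra ht'
  have hlonger := hmax _ (s.concat ht) (by rw [Walk.append_concat]; exact hs.concat ht' ht)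
  simp at hlonger

variable [DecidableEq V]

theorem IsAcyclic.card_filter_neighborFinset_mem_support_le_one (hG : G.IsAcyclic) {a w : V}
    {q : G.Walk a w} (hq : q.IsPath) :
    #{z ∈ G.neighborFinset w | z ∈ q.support} ≤ 1 :=
  card_le_one.mpr fun z₁ hz₁ z₂ hz₂ => by
    simp only [mem_filter, mem_neighborFinset] at hz₁ hz₂
    exact (hG.eq_penultimate_of_adj_end hq hz₁.1 hz₁.2).trans
      (hG.eq_penultimate_of_adj_end hq hz₂.1 hz₂.2).symm

theorem IsAcyclic.exists_isPath_cons_degree_eq_one (hG : G.IsAcyclic) {a w z : V}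
    {q : G.Walk a w} (hq : q.IsPath)
    (hmax : ∀ y (p : G.Walk a y), p.IsPath ∧ 3 ≤ G.degree y → p.length ≤ q.length)
    (hwz : G.Adj w z) (hz : z ∉ q.support) :
    ∃ (x : V) (s : G.Walk z x), (Walk.cons hwz s).IsPath ∧ G.degree x = 1 ∧
      ∀ v ∈ s.support, G.degree v < 3 := by
  obtain ⟨x, s, hs, hx⟩ := hG.exists_isPath_append_degree_eq_one (hq.concat hz hwz)
    (Walk.not_nil_of_ne fun h => hz (h ▸ q.start_mem_support))
  rw [Walk.concat_append] at hs
  refine ⟨x, s, hs.of_append_right, hx, fun v hv => ?_⟩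
  by_contra! hv3
  have hpre : (q.append (Walk.cons hwz (s.takeUntil v hv))).IsPath := by
    have h := hs
    rw [← s.take_spec hv, ← Walk.cons_append, Walk.append_assoc] at h
    exact h.of_append_left
  have hlonger := hmax v _ ⟨hpre, hv3⟩
  simp at hlonger

theorem IsAcyclic.exists_isPath_degree_eq_one_card_filter_three_le_degree_le_one
    (hG : G.IsAcyclic) (hb : ∃ v, 3 ≤ G.degree v) :
    ∃ (x y : V) (p : G.Walk x y), x ≠ y ∧ G.degree x = 1 ∧ G.degree y = 1 ∧ p.IsPath ∧
      #(p.support.toFinset.filter fun v => 3 ≤ G.degree v) ≤ 1 := by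
  obtain ⟨b, hb⟩ := hb
  obtain ⟨w, q, ⟨hq, hw⟩, hmax⟩ := exists_walk_forall_length_le_length (a := b)
    (fun x (p : G.Walk b x) => p.IsPath ∧ 3 ≤ G.degree x) ⟨b, .nil, by simp, hb⟩ fun _ _ h => h.1
  obtain ⟨z₁, hz₁, z₂, hz₂, hne⟩ := one_lt_card.mp <|
      show 1 < #{z ∈ G.neighborFinset w | z ∉ q.support} by
    have := card_filter_add_card_filter_not (s := G.neighborFinset w) (· ∈ q.support)
    have := hG.card_filter_neighborFinset_mem_support_le_one hq
    rw [card_neighborFinset_eq_degree] at *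
    omega
  simp only [mem_filter, mem_neighborFinset] at hz₁ hz₂
  obtain ⟨x₁, s₁, hl₁, hx₁, hs₁⟩ := hG.exists_isPath_cons_degree_eq_one hq hmax hz₁.1 hz₁.2
  obtain ⟨x₂, s₂, hl₂, hx₂, hs₂⟩ := hG.exists_isPath_cons_degree_eq_one hq hmax hz₂.1 hz₂.2
  have hbranch : ∀ v ∈ ((Walk.cons hz₁.1 s₁).reverse.append (Walk.cons hz₂.1 s₂)).support,
      3 ≤ G.degree v → v = w := by
    intro v hv hv3
    simp only [Walk.mem_support_append_iff, Walk.support_reverse, List.mem_reverse,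
      Walk.support_cons, List.mem_cons] at hv
    rcases hv with (rfl | hv₁) | rfl | hv₂
    · rfl
    · have := hs₁ v hv₁; omega
    · rfl
    · have := hs₂ v hv₂; omega
  refine ⟨x₁, x₂, ((Walk.cons hz₁.1 s₁).reverse.append (Walk.cons hz₂.1 s₂)).bypass, ?_, hx₁,
    hx₂, Walk.bypass_isPath _, card_le_one.mpr fun u hu v hv => ?_⟩
  · rintro rfl
    have := (hG.subsingleton_path w x₁).elim ⟨_, hl₁⟩ ⟨_, hl₂⟩
    exact hne (by simpa using congrArg (fun p : G.Path w x₁ => p.1.snd) this)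
  · simp only [mem_filter, List.mem_toFinset] at hu hv
    exact (hbranch u (Walk.support_bypass_subset_support _ hu.1) hu.2).trans
      (hbranch v (Walk.support_bypass_subset_support _ hv.1) hv.2).symm

end SimpleGraph

theorem not_tree_of_branching_conditions_general {V : Type*} [Fintype V] [DecidableEq V]
    (G : SimpleGraph V) [DecidableRel G.Adj]
    (hleaves : ∃ a b : V, a ≠ b ∧ G.degree a = 1 ∧ G.degree b = 1)
    (hpaths : ∀ (a b : V) (p : G.Walk a b), a ≠ b → G.degree a = 1 → G.degree b = 1 →
      p.IsPath → 2 ≤ (p.support.toFinset.filter fun v => 3 ≤ G.degree v).card) :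
    ¬ G.IsTree := by
  intro hT
  obtain ⟨a, b, hab, ha, hb⟩ := hleaves
  obtain ⟨p, hp⟩ := hT.connected.exists_isPath a b
  have hbranch : ∃ v, 3 ≤ G.degree v := by
    obtain ⟨v, hv⟩ := card_pos.mp (two_pos.trans_le (hpaths a b p hab ha hb hp))
    exact ⟨v, (mem_filter.mp hv).2⟩
  obtain ⟨x, y, r, hxy, hx, hy, hr, hcard⟩ :=
    hT.isAcyclic.exists_isPath_degree_eq_one_card_filter_three_le_degree_le_one hbranch
  have := hpaths x y r hxy hx hy hr
  omega

/-- A connected graph in which every cycle has at least 3 vertices of degree ≥ 3,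
every vertex has degree ≥ 1, there are at least two vertices of degree 1, and every
path joining two degree-1 vertices contains at least 2 vertices of degree ≥ 3,
is not a tree. -/
theorem not_tree_of_branching_conditions {V : Type*} [Fintype V] [DecidableEq V]
    (G : SimpleGraph V) [DecidableRel G.Adj] (hconn : G.Connected)
    (hcyc : ∀ (a : V) (c : G.Walk a a), c.IsCycle →
      3 ≤ (c.support.toFinset.filter fun v => 3 ≤ G.degree v).card)
    (hmin : ∀ v : V, 1 ≤ G.degree v)
    (hleaves : ∃ a b : V, a ≠ b ∧ G.degree a = 1 ∧ G.degree b = 1)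
    (hpaths : ∀ (a b : V) (p : G.Walk a b), a ≠ b → G.degree a = 1 → G.degree b = 1 →
      p.IsPath → 2 ≤ (p.support.toFinset.filter fun v => 3 ≤ G.degree v).card) :
    ¬ G.IsTree :=
  not_tree_of_branching_conditions_general G hleaves hpaths
end

section
/- Let G be a finite simple graph and σ an automorphism of G. If v is a vertex moved by σ (σ(v) ≠ v), and H_v is a connected subgraph of G containing v that is maximal with respect to containing no vertex fixed by σ of degree 1 or degree ≥ 3, then the corresponding subgraph H_{σ(v)} (defined the same way starting from σ(v)) is isomorphic to H_v, and H_v and H_{σ(v)} are either equal or vertex-disjoint. -/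
/-!
`H_u` is the connected component of `u` in the graph obtained from `G` by deleting the fixed
vertices of degree 1 or at least 3. An automorphism `σ` preserves degrees and fixed points,
so it is also an automorphism of that graph; hence it maps the component of `v` onto the
component of `σ v`, and two connected components are either equal or disjoint.
-/

/-- The restriction of `G` to the vertices that are not "bad" for `σ`, where a vertex is
bad if it is fixed by `σ` and has degree 1 or degree at least 3 in `G`. -/
def goodRestriction {V : Type*} [Fintype V] (G : SimpleGraph V) [DecidableRel G.Adj]
    (σ : Equiv.Perm V) : SimpleGraph V where
  Adj x y := G.Adj x y ∧
    ¬(σ x = x ∧ (G.degree x = 1 ∨ 3 ≤ G.degree x)) ∧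
    ¬(σ y = y ∧ (G.degree y = 1 ∨ 3 ≤ G.degree y))
  symm := by
    refine ⟨fun x y h => ?_⟩
    exact ⟨h.1.symm, h.2.2, h.2.1⟩
  loopless := by
    refine ⟨fun x h => ?_⟩
    exact G.irrefl h.1

/-- The vertex set of `H_u`: the maximal connected set of vertices containing `u` and
avoiding bad fixed vertices, i.e. the vertices reachable from `u` in the restriction. -/
def Hset {V : Type*} [Fintype V] (G : SimpleGraph V) [DecidableRel G.Adj]
    (σ : Equiv.Perm V) (u : V) : Set V :=
  {w | (goodRestriction G σ).Reachable u w}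

theorem SimpleGraph.setOf_reachable_eq_or_disjoint {V : Type*} (G : SimpleGraph V) (u v : V) :
    {w | G.Reachable u w} = {w | G.Reachable v w} ∨
      Disjoint {w | G.Reachable u w} {w | G.Reachable v w} := by
  by_cases huv : G.Reachable u v
  · exact .inl (Set.ext fun w => ⟨huv.symm.trans, huv.trans⟩)
  · exact .inr (Set.disjoint_left.mpr fun w huw hvw => huv (huw.trans hvw.symm))

section Automorphism

variable {V : Type*} [Fintype V] {G : SimpleGraph V} [DecidableRel G.Adj]

theorem goodRestriction_adj_map_iff (φ : G ≃g G) {x y : V} :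
    (goodRestriction G φ.toEquiv).Adj (φ x) (φ y) ↔ (goodRestriction G φ.toEquiv).Adj x y := by
  have map_fixed_iff (z : V) : φ.toEquiv (φ z) = φ z ↔ φ.toEquiv z = z := φ.injective.eq_iff
  simp only [goodRestriction, map_fixed_iff, φ.map_adj_iff, φ.degree_eq]

def SimpleGraph.Iso.goodRestriction (φ : G ≃g G) :
    goodRestriction G φ.toEquiv ≃g goodRestriction G φ.toEquiv :=
  ⟨φ.toEquiv, goodRestriction_adj_map_iff φ⟩

theorem bijOn_Hset (φ : G ≃g G) (v : V) :
    Set.BijOn φ (Hset G φ.toEquiv v) (Hset G φ.toEquiv (φ v)) :=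
  φ.toEquiv.bijOn fun _ => (φ.goodRestriction).reachable_iff

end Automorphism

theorem Hv_iso_and_eq_or_disjoint_general {V : Type*} [Fintype V] (G : SimpleGraph V)
    [DecidableRel G.Adj] (σ : Equiv.Perm V)
    (hσ : ∀ x y : V, G.Adj (σ x) (σ y) ↔ G.Adj x y) (v : V) :
    Nonempty ((G.induce (Hset G σ v)) ≃g (G.induce (Hset G σ (σ v)))) ∧
      (Hset G σ v = Hset G σ (σ v) ∨ Disjoint (Hset G σ v) (Hset G σ (σ v))) := by
  let φ : G ≃g G := ⟨σ, hσ _ _⟩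
  exact ⟨⟨φ.induce (bijOn_Hset φ v)⟩,
    (goodRestriction G σ).setOf_reachable_eq_or_disjoint v (σ v)⟩

/-- If `σ` is an automorphism of `G` and `v` is moved by `σ`, then the maximal connected
subgraph `H_v` of `G` containing `v` and avoiding fixed vertices of degree 1 or ≥ 3 is
isomorphic to `H_{σ(v)}`, and the two are either equal or vertex-disjoint. -/
theorem Hv_iso_and_eq_or_disjoint {V : Type*} [Fintype V] (G : SimpleGraph V)
    [DecidableRel G.Adj] (σ : Equiv.Perm V)
    (hσ : ∀ x y : V, G.Adj (σ x) (σ y) ↔ G.Adj x y) (v : V) (hv : σ v ≠ v) :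
    Nonempty ((G.induce (Hset G σ v)) ≃g (G.induce (Hset G σ (σ v)))) ∧
      (Hset G σ v = Hset G σ (σ v) ∨ Disjoint (Hset G σ v) (Hset G σ (σ v))) :=
  Hv_iso_and_eq_or_disjoint_general G σ hσ v
end

section
/- Let σ be a permutation of [n] and σ* the induced permutation on 2-element subsets of [n]. If {i,j} lies in a 2-cycle or 3-cycle of σ* (i.e., the σ*-orbit of {i,j} has size 2 or 3, say size m ∈ {2,3}), then either both i and j lie in m-cycles of σ, or i and j lie in a common 2m-cycle of σ with σ^m({i,j}) = {i,j} setwise (a 'diagonal' of the 2m-cycle). -/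
/-- `IsMinPeriod σ i k` : the orbit of `i` under the permutation `σ` has size exactly `k`,
i.e. `i` lies in a `k`-cycle of `σ`. -/
def IsMinPeriodPerm {α : Type*} (σ : Equiv.Perm α) (i : α) (k : ℕ) : Prop :=
  0 < k ∧ (σ ^ k) i = i ∧ ∀ l : ℕ, 0 < l → l < k → (σ ^ l) i ≠ i

/-- `PairMinPeriod σ e m` : the orbit of the 2-subset `e` under the induced
permutation `σ*` has size exactly `m`. -/
def PairMinPeriod {α : Type*} (σ : Equiv.Perm α) (e : Sym2 α) (m : ℕ) : Prop :=
  0 < m ∧ Sym2.map (σ ^ m) e = e ∧ ∀ l : ℕ, 0 < l → l < m → Sym2.map (σ ^ l) e ≠ e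

private lemma pow_add_apply' {α : Type*} (σ : Equiv.Perm α) (x : α) (a b : ℕ) :
    (σ ^ (a + b)) x = (σ ^ a) ((σ ^ b) x) := by
  rw [pow_add]; rfl

private lemma caseA_aux {α : Type*} (σ : Equiv.Perm α) (x : α) (hx : σ x ≠ x)
    {m : ℕ} (hm : m = 2 ∨ m = 3) (h : (σ ^ m) x = x) : IsMinPeriodPerm σ x m := by
  refine ⟨by rcases hm with rfl | rfl <;> omega, h, ?_⟩
  intro l hl hlm hle
  rcases hm with rfl | rfl
  · interval_cases l
    · exact hx (by simpa using hle)
  · interval_cases l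
    · exact hx (by simpa using hle)
    · apply hx
      have h3 : (σ ^ 3) x = σ x := by
        rw [show (3 : ℕ) = 1 + 2 from rfl, pow_add_apply', hle, pow_one]
      exact h3.symm.trans h

private lemma caseB_aux {α : Type*} (σ : Equiv.Perm α) (i j : α) (hij : i ≠ j)
    (hi : σ i ≠ i) {m : ℕ} (hm : m = 2 ∨ m = 3) (h1 : (σ ^ m) i = j) (h2 : (σ ^ m) j = i)
    (hnot : ¬(σ i = j ∧ σ j = i)) : IsMinPeriodPerm σ i (2 * m) := by
  have hfix : (σ ^ (2 * m)) i = i := by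
    rw [two_mul, pow_add_apply', h1, h2]
  refine ⟨by rcases hm with rfl | rfl <;> omega, hfix, ?_⟩
  intro l hl hlm hle
  rcases hm with rfl | rfl
  · -- m = 2, period 4
    have hfix4 : (σ ^ 4) i = i := by simpa using hfix
    have hlm' : l < 4 := by omega
    interval_cases l
    · exact hi (by simpa using hle)
    · exact hij (hle.symm.trans h1)
    · apply hi
      have h4 : (σ ^ 4) i = σ i := by
        rw [show (4 : ℕ) = 1 + 3 from rfl, pow_add_apply', hle, pow_one]
      exact h4.symm.trans hfix4
  · -- m = 3, period 6
    have hfix6 : (σ ^ 6) i = i := by simpa using hfix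
    have key2 : (σ ^ 2) i ≠ i := by
      intro hle2
      have e1 : σ i = j := by
        rw [show (3 : ℕ) = 1 + 2 from rfl, pow_add_apply', hle2, pow_one] at h1
        exact h1
      have e2 : σ j = i := by
        have h2' : σ (σ i) = i := by
          rw [show (2 : ℕ) = 1 + 1 from rfl, pow_add_apply', pow_one] at hle2
          exact hle2
        rw [← e1]; exact h2'
      exact hnot ⟨e1, e2⟩
    have hlm' : l < 6 := by omega
    interval_cases l
    · exact hi (by simpa using hle)
    · exact key2 hle
    · exact hij (hle.symm.trans h1)
    · apply key2
      rw [show (6 : ℕ) = 2 + 4 from rfl, pow_add_apply', hle] at hfix6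
      exact hfix6
    · apply hi
      have h6 : (σ ^ 6) i = σ i := by
        rw [show (6 : ℕ) = 1 + 5 from rfl, pow_add_apply', hle, pow_one]
      exact h6.symm.trans hfix6

/-- If a pair `{i,j}` of moved points lies in an `m`-cycle of `σ*` with `m ∈ {2,3}`, then
either both `i` and `j` lie in `m`-cycles of `σ`, or `i` and `j` lie in a common
`2m`-cycle of `σ` and `{i,j}` is a diagonal of it: `σ^m` fixes `{i,j}` setwise. -/
theorem pair_orbit_two_or_three {n : ℕ} (σ : Equiv.Perm (Fin n)) (i j : Fin n)
    (hij : i ≠ j) (hi : σ i ≠ i) (hj : σ j ≠ j) (m : ℕ) (hm : m = 2 ∨ m = 3)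
    (horb : PairMinPeriod σ s(i, j) m) :
    (IsMinPeriodPerm σ i m ∧ IsMinPeriodPerm σ j m) ∨
      (σ.SameCycle i j ∧ IsMinPeriodPerm σ i (2 * m) ∧ IsMinPeriodPerm σ j (2 * m) ∧
        Sym2.map (σ ^ m) s(i, j) = s(i, j)) := by
  obtain ⟨hm0, hfix, hmin⟩ := horb
  rw [Sym2.map_pair_eq, Sym2.eq_iff] at hfix
  rcases hfix with ⟨h1, h2⟩ | ⟨h1, h2⟩
  · exact Or.inl ⟨caseA_aux σ i hi hm h1, caseA_aux σ j hj hm h2⟩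
  · have hnot : ¬(σ i = j ∧ σ j = i) := by
      rintro ⟨a, b⟩
      exact hmin 1 one_pos (by rcases hm with rfl | rfl <;> omega)
        (by rw [pow_one, Sym2.map_pair_eq, a, b, Sym2.eq_swap])
    refine Or.inr ⟨⟨(m : ℤ), by simpa using h1⟩,
      caseB_aux σ i j hij hi hm h1 h2 hnot,
      caseB_aux σ j i hij.symm hj hm h2 h1 (by tauto), ?_⟩
    rw [Sym2.map_pair_eq, h1, h2, Sym2.eq_swap]
end
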